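/- Identifiability of finite mixtures of linear regressions with fixed positive weights on an open set of covariates (the slice lemma used in the proof of the MRSIP identifiability theorem): Let p ≥ 1, let U ⊆ ℝ^p be a nonempty open set, and let k, k̃ ≥ 1. Suppose a_1, …, a_k > 0 with Σ_{j=1}^k a_j = 1 and ã_1, …, ã_{k̃} > 0 with Σ_{j=1}^{k̃} ã_j = 1, and suppose the pairs (β_1, σ_1²), …, (β_k, σ_k²) ∈ ℝ^p × (0,∞) are pairwise distinct and likewise the pairs (β̃_j, σ̃_j²) are pairwise distinct. If for every x ∈ U and every y ∈ ℝ, Σ_{j=1}^k a_j φ(y | xᵀβ_j, σ_j²) = Σ_{j=1}^{k̃} ã_j φ(y | xᵀβ̃_j, σ̃_j²), then k = k̃ and there exists a permutation τ of {1, …, k} such that a_j = ã_{τ(j)}, β_j = β̃_{τ(j)}, and σ_j² = σ̃_{τ(j)}² for all j. -/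

import Mathlib

open scoped RealInnerProductSpace

/-- The density of the normal distribution with mean `μ` and variance `v`. -/
noncomputable def normalPDF (y μ v : ℝ) : ℝ :=
  (Real.sqrt (2 * Real.pi * v))⁻¹ * Real.exp (-(y - μ) ^ 2 / (2 * v))

/-!
Fix a covariate `x ∈ U` at which `b ↦ ⟪x, b⟫` separates the finitely many regression vectors of
both mixtures; it exists because the complement of finitely many hyperplanes is dense. At `x` the
hypothesis becomes an equality between two combinations of normal densities whose
(mean, variance) parameters are pairwise distinct. Normal densities with distinct parameters are
linearly independent: ordering the parameters lexicographically by (variance, mean), every density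
is negligible as `y → ∞` against one with a larger parameter. Comparing coefficients matches the
components.
-/

open Filter Topology Set Submodule

theorem notMem_span_of_tendsto_div {𝕜 α ι : Type*} [NormedField 𝕜] {l : Filter α} [l.NeBot]
    {f : ι → α → 𝕜} {g : α → 𝕜} {s : Set ι} (hg : ∀ᶠ x in l, g x ≠ 0)
    (hf : ∀ i ∈ s, Tendsto (fun x => f i x / g x) l (𝓝 0)) :
    g ∉ span 𝕜 (f '' s) := by
  intro hmem
  have hsmall : ∀ h ∈ span 𝕜 (f '' s), Tendsto (fun x => h x / g x) l (𝓝 0) := by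
    intro h hh
    induction hh using span_induction with
    | mem h hh =>
      obtain ⟨i, hi, rfl⟩ := hh
      exact hf i hi
    | zero => simp
    | add h₁ h₂ _ _ ih₁ ih₂ => simpa [add_div] using ih₁.add ih₂
    | smul c h _ ih => simpa [mul_div_assoc] using ih.const_mul c
  have hone : Tendsto (fun x => g x / g x) l (𝓝 1) :=
    tendsto_const_nhds.congr' (hg.mono fun x hx => (div_self hx).symm)
  exact one_ne_zero (tendsto_nhds_unique hone (hsmall g hmem))

theorem tendsto_quadratic_atBot {A B C : ℝ} (h : A < 0 ∨ A = 0 ∧ B < 0) :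
    Tendsto (fun y : ℝ => A * y ^ 2 + B * y + C) atTop atBot := by
  rcases h with hA | ⟨rfl, hB⟩
  · have hlin : Tendsto (fun y : ℝ => A * y + B) atTop atBot :=
      tendsto_atBot_add_const_right _ B (tendsto_id.const_mul_atTop_of_neg hA)
    exact (tendsto_atBot_add_const_right _ C (tendsto_id.atTop_mul_atBot₀ hlin)).congr
      fun y => by simp only [id]; ring
  · exact (tendsto_atBot_add_const_right _ C (tendsto_id.const_mul_atTop_of_neg hB)).congr
      fun y => by simp only [id]; ring

theorem normalPDF_div_normalPDF {μ v μ₀ v₀ : ℝ} (hv : 0 < v) (hv₀ : 0 < v₀) (y : ℝ) :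
    normalPDF y μ v / normalPDF y μ₀ v₀ =
      Real.sqrt (v₀ / v) * Real.exp ((1 / (2 * v₀) - 1 / (2 * v)) * y ^ 2 +
        (μ / v - μ₀ / v₀) * y + (μ₀ ^ 2 / (2 * v₀) - μ ^ 2 / (2 * v))) := by
  have hexp : (1 / (2 * v₀) - 1 / (2 * v)) * y ^ 2 + (μ / v - μ₀ / v₀) * y +
      (μ₀ ^ 2 / (2 * v₀) - μ ^ 2 / (2 * v)) =
        -(y - μ) ^ 2 / (2 * v) - -(y - μ₀) ^ 2 / (2 * v₀) := by
    field_simp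
    ring
  rw [hexp, Real.exp_sub, normalPDF, normalPDF, Real.sqrt_div' _ hv.le]
  have h1 : Real.sqrt (2 * Real.pi * v) = Real.sqrt (2 * Real.pi) * Real.sqrt v := by
    rw [Real.sqrt_mul (by positivity)]
  have h2 : Real.sqrt (2 * Real.pi * v₀) = Real.sqrt (2 * Real.pi) * Real.sqrt v₀ := by
    rw [Real.sqrt_mul (by positivity)]
  have : 0 < Real.sqrt (2 * Real.pi) := by positivity
  have : 0 < Real.sqrt v := Real.sqrt_pos.2 hv
  have : 0 < Real.sqrt v₀ := Real.sqrt_pos.2 hv₀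
  rw [h1, h2]
  field_simp

theorem tendsto_normalPDF_div_normalPDF {μ v μ₀ v₀ : ℝ} (hv : 0 < v) (hv₀ : 0 < v₀)
    (hlt : toLex (v, μ) < toLex (v₀, μ₀)) :
    Tendsto (fun y => normalPDF y μ v / normalPDF y μ₀ v₀) atTop (𝓝 0) := by
  simp_rw [normalPDF_div_normalPDF hv hv₀]
  rw [← mul_zero (Real.sqrt (v₀ / v))]
  refine (Real.tendsto_exp_atBot.comp (tendsto_quadratic_atBot ?_)).const_mul _
  rcases Prod.Lex.toLex_lt_toLex.1 hlt with hvv | ⟨rfl, hμ⟩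
  · left
    have : 1 / (2 * v₀) < 1 / (2 * v) := one_div_lt_one_div_of_lt (by positivity) (by linarith)
    linarith
  · right
    refine ⟨sub_self _, ?_⟩
    have : μ / v < μ₀ / v := div_lt_div_of_pos_right hμ hv
    linarith

theorem normalPDF_pos {y μ v : ℝ} (hv : 0 < v) : 0 < normalPDF y μ v := by
  unfold normalPDF; positivity

theorem linearIndepOn_normalPDF :
    LinearIndepOn ℝ (fun q : ℝ × ℝ => fun y => normalPDF y q.1 q.2) {q | 0 < q.2} := by
  classical
  refine linearIndepOn_of_finite _ fun t hts ht => ?_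
  obtain ⟨t, rfl⟩ := ht.exists_finset_coe
  clear ht
  induction t using Finset.induction_on_max_value (fun q : ℝ × ℝ => toLex (q.2, q.1)) with
  | empty => simp
  | insert q₀ t hq₀ hmax ih =>
    rw [Finset.coe_insert] at hts ⊢
    obtain ⟨hq₀pos, htpos⟩ := insert_subset_iff.1 hts
    have hlt : ∀ q ∈ t, toLex (q.2, q.1) < toLex (q₀.2, q₀.1) := fun q hq =>
      (hmax q hq).lt_of_ne fun h => by
        simp only [toLex_inj, Prod.mk.injEq] at h
        exact hq₀ (Prod.ext h.2 h.1 ▸ hq)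
    refine (ih htpos).insert (notMem_span_of_tendsto_div (l := atTop) ?_ fun q hq => ?_)
    · exact .of_forall fun y => (normalPDF_pos hq₀pos).ne'
    · exact tendsto_normalPDF_div_normalPDF (htpos hq) hq₀pos (hlt q hq)

theorem exists_equiv_of_sum_smul_eq {R M α ι ι' : Type*} [Semiring R] [AddCommMonoid M]
    [Module R M] [Fintype ι] [Fintype ι'] {g : α → M} {S : Set α} (hg : LinearIndepOn R g S)
    {P : ι → α} {P' : ι' → α} (hP : P.Injective) (hP' : P'.Injective)
    (hPS : range P ⊆ S) (hP'S : range P' ⊆ S) {a : ι → R} {a' : ι' → R}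
    (ha : ∀ i, a i ≠ 0) (ha' : ∀ i, a' i ≠ 0)
    (h : ∑ i, a i • g (P i) = ∑ i, a' i • g (P' i)) :
    ∃ τ : ι ≃ ι', ∀ i, P' (τ i) = P i ∧ a' (τ i) = a i := by
  set l := Finsupp.mapDomain P ((Finsupp.linearEquivFunOnFinite R R ι).symm a)
  set l' := Finsupp.mapDomain P' ((Finsupp.linearEquivFunOnFinite R R ι').symm a')
  have hl : ∀ i, l (P i) = a i := fun i => by simp [l, Finsupp.mapDomain_apply hP]
  have hl' : ∀ i, l' (P' i) = a' i := fun i => by simp [l', Finsupp.mapDomain_apply hP']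
  have hll' : l = l' := by
    refine linearIndepOn_iffₛ.1 hg l ?_ l' ?_ ?_
    · exact (Finsupp.mem_supported' _ _).2 fun q hq =>
        Finsupp.mapDomain_of_notMem_range _ _ fun hr => hq (hPS hr)
    · exact (Finsupp.mem_supported' _ _).2 fun q hq =>
        Finsupp.mapDomain_of_notMem_range _ _ fun hr => hq (hP'S hr)
    · simp only [l, l', Finsupp.linearCombination_mapDomain]
      rw [Finsupp.linearCombination_eq_fintype_linearCombination_apply,
        Finsupp.linearCombination_eq_fintype_linearCombination_apply,
        Fintype.linearCombination_apply, Fintype.linearCombination_apply]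
      exact h
  have hrange : range P = range P' := by
    refine Subset.antisymm ?_ ?_ <;> rintro - ⟨i, rfl⟩
    · exact Finsupp.mem_range_of_mapDomain_ne_zero (hll' ▸ hl i ▸ ha i)
    · exact Finsupp.mem_range_of_mapDomain_ne_zero (hll' ▸ hl' i ▸ ha' i)
  refine ⟨(Equiv.ofInjective P hP).trans
    ((Equiv.setCongr hrange).trans (Equiv.ofInjective P' hP').symm), fun i => ?_⟩
  have hτ : P' ((Equiv.ofInjective P' hP').symm (Equiv.setCongr hrange ⟨P i, i, rfl⟩)) = P i :=
    Equiv.apply_ofInjective_symm hP' _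
  exact ⟨hτ, by simpa [← hl, ← hl', hll'] using congrArg l' hτ⟩

theorem dense_setOf_inner_ne_zero {E : Type*} [NormedAddCommGroup E] [InnerProductSpace ℝ E]
    {w : E} (hw : w ≠ 0) : Dense {x : E | ⟪w, x⟫ ≠ 0} :=
  (dense_compl_singleton 0).preimage <| (innerSL ℝ w).isOpenMap_of_ne_zero <| by
    simpa [← norm_eq_zero] using hw

theorem dense_setOf_injOn_inner {E : Type*} [NormedAddCommGroup E] [InnerProductSpace ℝ E]
    {B : Set E} (hB : B.Finite) : Dense {x : E | B.InjOn fun b => ⟪x, b⟫} := by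
  set W := (fun q : E × E => q.1 - q.2) '' (B ×ˢ B) \ {0}
  have hW : Dense (⋂₀ ((fun w => {x : E | ⟪w, x⟫ ≠ 0}) '' W)) := by
    refine (((hB.prod hB).image _).sdiff.image _).dense_sInter ?_ ?_ <;> rintro - ⟨w, hw, rfl⟩
    · exact isOpen_ne.preimage (continuous_const.inner continuous_id)
    · exact dense_setOf_inner_ne_zero hw.2
  refine hW.mono fun x hx b₁ hb₁ b₂ hb₂ hb => sub_eq_zero.1 (by_contra fun hne => ?_)
  refine hx _ ⟨_, ⟨⟨(b₁, b₂), ⟨hb₁, hb₂⟩, rfl⟩, hne⟩, rfl⟩ ?_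
  show ⟪b₁ - b₂, x⟫ = 0
  rw [inner_sub_left, real_inner_comm x, real_inner_comm x, sub_eq_zero]
  exact hb

theorem injective_inner_prod {ι E : Type*} [NormedAddCommGroup E] [InnerProductSpace ℝ E]
    {x : E} {B : Set E} (hx : B.InjOn fun b => ⟪x, b⟫) {β : ι → E} (hβ : range β ⊆ B)
    {v : ι → ℝ} (hsep : ∀ i j, i ≠ j → (β i, v i) ≠ (β j, v j)) :
    Function.Injective fun j => (⟪x, β j⟫, v j) := fun i j hij =>
  by_contra fun hne => hsep i j hne <|
    Prod.ext (hx (hβ ⟨i, rfl⟩) (hβ ⟨j, rfl⟩) (congrArg Prod.fst hij)) (congrArg Prod.snd hij :)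

theorem mixture_linear_regression_identifiability_general
    {p k k' : ℕ}
    (U : Set (EuclideanSpace ℝ (Fin p))) (hUopen : IsOpen U) (hUne : U.Nonempty)
    -- mixing weights
    (a : Fin k → ℝ) (a' : Fin k' → ℝ)
    (ha : ∀ j, 0 < a j) (ha' : ∀ j, 0 < a' j)
    -- component regression coefficients and variances
    (β : Fin k → EuclideanSpace ℝ (Fin p)) (β' : Fin k' → EuclideanSpace ℝ (Fin p))
    (v : Fin k → ℝ) (v' : Fin k' → ℝ)
    (hv : ∀ j, 0 < v j) (hv' : ∀ j, 0 < v' j)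
    -- the pairs `(β_j, σ_j²)` are pairwise distinct
    (hsep : ∀ i j : Fin k, i ≠ j → (β i, v i) ≠ (β j, v j))
    (hsep' : ∀ i j : Fin k', i ≠ j → (β' i, v' i) ≠ (β' j, v' j))
    -- the two mixture densities agree on `U`
    (heq : ∀ x ∈ U, ∀ y : ℝ,
      ∑ j, a j * normalPDF y ⟪x, β j⟫ (v j) =
        ∑ j, a' j * normalPDF y ⟪x, β' j⟫ (v' j)) :
    k = k' ∧ ∃ τ : Fin k ≃ Fin k',
      ∀ j : Fin k, a j = a' (τ j) ∧ β j = β' (τ j) ∧ v j = v' (τ j) := by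
  obtain ⟨x, hxU, hx⟩ := (dense_setOf_injOn_inner
    ((finite_range β).union (finite_range β'))).inter_open_nonempty U hUopen hUne
  have hmix : ∑ j, a j • (fun y => normalPDF y ⟪x, β j⟫ (v j)) =
      ∑ j, a' j • (fun y => normalPDF y ⟪x, β' j⟫ (v' j)) :=
    funext fun y => by simpa only [Finset.sum_apply, Pi.smul_apply, smul_eq_mul] using heq x hxU y
  obtain ⟨τ, hτ⟩ := exists_equiv_of_sum_smul_eq linearIndepOn_normalPDF
    (injective_inner_prod hx subset_union_left hsep)
    (injective_inner_prod hx subset_union_right hsep') (range_subset_iff.2 hv)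
    (range_subset_iff.2 hv') (fun j => (ha j).ne') (fun j => (ha' j).ne') hmix
  refine ⟨by simpa using Fintype.card_congr τ, τ, fun j => ⟨(hτ j).2.symm, ?_, ?_⟩⟩
  · exact hx (Or.inr ⟨τ j, rfl⟩) (Or.inl ⟨j, rfl⟩) (congrArg Prod.fst (hτ j).1) |>.symm
  · exact (congrArg Prod.snd (hτ j).1).symm

/-- Identifiability of finite mixtures of linear regressions with fixed positive
weights on a nonempty open set of covariates. -/
theorem mixture_linear_regression_identifiability
    {p k k' : ℕ} (hp : 1 ≤ p) (hk : 1 ≤ k) (hk' : 1 ≤ k')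
    (U : Set (EuclideanSpace ℝ (Fin p))) (hUopen : IsOpen U) (hUne : U.Nonempty)
    -- mixing weights
    (a : Fin k → ℝ) (a' : Fin k' → ℝ)
    (ha : ∀ j, 0 < a j) (ha' : ∀ j, 0 < a' j)
    (hasum : ∑ j, a j = 1) (ha'sum : ∑ j, a' j = 1)
    -- component regression coefficients and variances
    (β : Fin k → EuclideanSpace ℝ (Fin p)) (β' : Fin k' → EuclideanSpace ℝ (Fin p))
    (v : Fin k → ℝ) (v' : Fin k' → ℝ)
    (hv : ∀ j, 0 < v j) (hv' : ∀ j, 0 < v' j)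
    -- the pairs `(β_j, σ_j²)` are pairwise distinct
    (hsep : ∀ i j : Fin k, i ≠ j → (β i, v i) ≠ (β j, v j))
    (hsep' : ∀ i j : Fin k', i ≠ j → (β' i, v' i) ≠ (β' j, v' j))
    -- the two mixture densities agree on `U`
    (heq : ∀ x ∈ U, ∀ y : ℝ,
      ∑ j, a j * normalPDF y ⟪x, β j⟫ (v j) =
        ∑ j, a' j * normalPDF y ⟪x, β' j⟫ (v' j)) :
    k = k' ∧ ∃ τ : Fin k ≃ Fin k',
      ∀ j : Fin k, a j = a' (τ j) ∧ β j = β' (τ j) ∧ v j = v' (τ j) :=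
  mixture_linear_regression_identifiability_general U hUopen hUne a a' ha ha' β β' v v' hv hv' hsep
    hsep' heq
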